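/- For all integers n ≥ 3 and k ≥ 2, the smallest positive eigenvalue of the Laplacian of the ring-of-cliques graph satisfies λ_min^+(L(G_RC(n,k))) = θ₂(2 − 2cos(2π/n)), where θ₂(λ) = (k + λ − √(λ² + 2(k−2)λ + k²))/2. -/

import Mathlib

open Matrix

/-- The set of (real) eigenvalues of a matrix. -/
def eigSet {N : Type*} [Fintype N] (A : Matrix N N ℝ) : Set ℝ :=
  {μ | ∃ x : N → ℝ, x ≠ 0 ∧ A.mulVec x = μ • x}

/-- The largest eigenvalue of a matrix. -/
noncomputable def lamMax {N : Type*} [Fintype N] (A : Matrix N N ℝ) : ℝ :=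
  sSup (eigSet A)

/-- The smallest positive eigenvalue of a matrix. -/
noncomputable def lamMinPos {N : Type*} [Fintype N] (A : Matrix N N ℝ) : ℝ :=
  sInf {μ ∈ eigSet A | 0 < μ}

/-- The condition number `χ(A) = λ_max(A) / λ_min^+(A)`. -/
noncomputable def chi {N : Type*} [Fintype N] (A : Matrix N N ℝ) : ℝ :=
  lamMax A / lamMinPos A

/-- The ring-of-cliques graph `G_RC(n,k)`: `n` cliques of size `k`, whose `0`-th
vertices are connected in a ring. Vertex `(i, a)` is adjacent to `(j, b)` iff
either `i = j` and `a ≠ b`, or `a = b = 0` and `j ≡ i ± 1 (mod n)`. -/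
def ringClique (n k : ℕ) : SimpleGraph (Fin n × Fin k) where
  Adj v w := v ≠ w ∧ (v.1 = w.1 ∨
    (v.2.val = 0 ∧ w.2.val = 0 ∧
      (w.1.val = (v.1.val + 1) % n ∨ v.1.val = (w.1.val + 1) % n)))
  symm := by
    constructor
    rintro v w ⟨hne, h⟩
    refine ⟨fun h' => hne h'.symm, ?_⟩
    rcases h with h | ⟨h1, h2, h3⟩
    · exact Or.inl h.symm
    · exact Or.inr ⟨h2, h1, h3.symm⟩
  loopless := ⟨fun v h => h.1 rfl⟩

instance (n k : ℕ) : DecidableRel (ringClique n k).Adj := fun v w =>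
  decidable_of_iff (v ≠ w ∧ (v.1 = w.1 ∨
    (v.2.val = 0 ∧ w.2.val = 0 ∧
      (w.1.val = (v.1.val + 1) % n ∨ v.1.val = (w.1.val + 1) % n)))) Iff.rfl

/-- `θ₂(λ) = (k + λ − √(λ² + 2(k−2)λ + k²))/2`. -/
noncomputable def theta2 (k : ℕ) (lam : ℝ) : ℝ :=
  ((k : ℝ) + lam - Real.sqrt (lam ^ 2 + 2 * ((k : ℝ) - 2) * lam + (k : ℝ) ^ 2)) / 2

/-!
Let `λ = 2 - 2 cos (2π/n)`. Every Laplacian eigenvector `H` of the cycle `C_n` with eigenvalue `ν`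
lifts to an eigenvector of `G_RC(n,k)` taking the value `(1 - t) H i` at the hub of clique `i` and
`H i` at its other vertices, with eigenvalue any root `t` of `t² - (k + ν) t + ν`; the cosine
eigenvector of `C_n` for `λ` thus produces the eigenvalue `θ₂(λ)`, the smaller root.

Conversely, let `0 < μ < 1` be an eigenvalue of `G_RC(n,k)`. The non-hub values of an eigenvector
are constant on each clique and the hub values form a nonzero eigenvector of `C_n` with eigenvalue
`ν = μ (k - μ) / (1 - μ) > 0`. Since `λ` is the spectral gap of `C_n`, `ν ≥ λ`, which says that
the quadratic for `λ` is nonpositive at `μ`, i.e. `μ ≥ θ₂(λ)`; eigenvalues `μ ≥ 1` are covered by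
`θ₂(λ) ≤ 1`. The spectral gap of `C_n` comes from solving `x (m + 1) + x (m - 1) = 2 cos φ x m`
explicitly: a solution `A cos (m φ) + B sin (m φ)` that is `n`-periodic with `0 < n φ < 2π`
vanishes.
-/

open Finset Real

theorem exists_cos_sin_of_recurrence {φ : ℝ} (hφ : sin φ ≠ 0) {g : ℕ → ℝ}
    (hg : ∀ m, g (m + 2) = 2 * cos φ * g (m + 1) - g m) :
    ∃ A B : ℝ, ∀ m : ℕ, g m = A * cos (m * φ) + B * sin (m * φ) := by
  refine ⟨g 0, (g 1 - g 0 * cos φ) / sin φ, fun m => ?_⟩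
  induction m using Nat.twoStepInduction with
  | zero => simp
  | one => simp [field]
  | more m ih₀ ih₁ =>
    have h₀ : (m : ℝ) * φ = (m + 1 : ℕ) * φ - φ := by push_cast; ring
    have h₂ : (m + 2 : ℕ) * φ = (m + 1 : ℕ) * φ + φ := by push_cast; ring
    rw [hg, ih₀, ih₁, h₀, h₂, cos_add, sin_add, cos_sub, sin_sub]
    ring

theorem eq_zero_of_cos_sin_periodic {φ θ A B : ℝ} (hφ : sin φ ≠ 0) (hθ : cos θ ≠ 1)
    (h₀ : A * cos θ + B * sin θ = A)
    (h₁ : A * cos (θ + φ) + B * sin (θ + φ) = A * cos φ + B * sin φ) : A = 0 ∧ B = 0 := by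
  rw [cos_add, sin_add] at h₁
  have e₁ : A * (cos θ - 1) + B * sin θ = 0 := by linear_combination h₀
  have e₂ : B * (cos θ - 1) - A * sin θ = 0 := by
    apply mul_left_cancel₀ hφ
    linear_combination h₁ - cos φ * h₀
  have hdet : (cos θ - 1) ^ 2 + sin θ ^ 2 ≠ 0 := by
    have : cos θ - 1 ≠ 0 := sub_ne_zero.mpr hθ
    positivity
  constructor
  · apply mul_left_cancel₀ hdet
    linear_combination (cos θ - 1) * e₁ - sin θ * e₂
  · apply mul_left_cancel₀ hdet
    linear_combination sin θ * e₁ + (cos θ - 1) * e₂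

theorem cos_two_pi_div_lt_one {n : ℕ} (hn : 1 < n) : cos (2 * π / n) < 1 := by
  have hn' : (1 : ℝ) < n := by exact_mod_cast hn
  refine (cos_le_one _).lt_of_ne ?_
  rw [Ne, cos_eq_one_iff_of_lt_of_lt (by linarith [show 0 < 2 * π / n by positivity, pi_pos])
    (div_lt_self (by positivity) hn')]
  positivity

theorem Fin.val_eq_val_add_one_mod_iff {n : ℕ} [NeZero n] (hn : 2 ≤ n) {i j : Fin n} :
    j.val = (i.val + 1) % n ↔ (j - i).val = 1 := by
  have h1 : ((1 : Fin n) : ℕ) = 1 := by rw [Fin.val_one', Nat.mod_eq_of_lt hn]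
  rw [← h1, ← Fin.ext_iff, sub_eq_iff_eq_add', Fin.ext_iff, Fin.val_add, h1]

namespace SimpleGraph

theorem lapMatrix_mulVec_apply_eq_sum {V R : Type*} [Fintype V] [DecidableEq V] [CommRing R]
    (G : SimpleGraph V) [DecidableRel G.Adj] (x : V → R) (v : V) :
    (G.lapMatrix R *ᵥ x) v = ∑ u, if G.Adj v u then x v - x u else 0 := by
  rw [lapMatrix_mulVec_apply, ← sum_filter, sum_sub_distrib, sum_const, nsmul_eq_mul,
    ← neighborFinset_eq_filter, card_neighborFinset_eq_degree]

section Cycle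

open Fin.NatCast

variable {n : ℕ} [NeZero n]

theorem cycleGraph_lapMatrix_mulVec_apply (hn : 3 ≤ n) (x : Fin n → ℝ) (i : Fin n) :
    ((cycleGraph n).lapMatrix ℝ *ᵥ x) i = 2 * x i - x (i + 1) - x (i - 1) := by
  obtain ⟨m, rfl⟩ := Nat.exists_eq_add_of_le' hn
  have hne : i - 1 ≠ i + 1 := by
    simp only [ne_eq, sub_eq_iff_eq_add, add_assoc i, left_eq_add]
    exact ne_of_beq_false rfl
  rw [lapMatrix_mulVec_apply, cycleGraph_degree_three_le, cycleGraph_neighborFinset,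
    sum_pair hne]
  push_cast
  ring

theorem cycleGraph_lapMatrix_mulVec_natCast (hn : 3 ≤ n) (x : Fin n → ℝ) (m : ℕ) :
    ((cycleGraph n).lapMatrix ℝ *ᵥ x) ((m + 1 : ℕ) : Fin n) =
      2 * x ((m + 1 : ℕ) : Fin n) - x ((m + 2 : ℕ) : Fin n) - x (m : Fin n) := by
  rw [cycleGraph_lapMatrix_mulVec_apply hn]
  push_cast
  rw [add_sub_cancel_right, add_assoc, one_add_one_eq_two]

theorem cycleGraph_lapMatrix_mulVec_cos (hn : 3 ≤ n) :
    (cycleGraph n).lapMatrix ℝ *ᵥ (fun i : Fin n => cos (2 * π * i.val / n)) =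
      (2 - 2 * cos (2 * π / n)) • fun i : Fin n => cos (2 * π * i.val / n) := by
  have hper : ∀ m : ℕ, cos (2 * π * ((m : Fin n) : ℕ) / n) = cos (2 * π * m / n) := by
    intro m
    have : Function.Periodic (fun m : ℕ => cos (2 * π * m / n)) n := fun m => by
      simp only
      rw [show 2 * π * ((m + n : ℕ) : ℝ) / n = 2 * π * m / n + 2 * π by
        push_cast; field_simp]
      exact cos_add_two_pi _
    simpa [Fin.val_natCast] using this.map_mod_nat m
  ext i
  obtain ⟨m, rfl⟩ : ∃ m : ℕ, ((m + 1 : ℕ) : Fin n) = i :=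
    ⟨i.val + n - 1, by rw [Nat.sub_add_cancel (by omega)]; simp⟩
  rw [cycleGraph_lapMatrix_mulVec_natCast hn, Pi.smul_apply, smul_eq_mul, hper, hper, hper]
  have h₀ : 2 * π * (m : ℝ) / n = 2 * π * (m + 1 : ℕ) / n - 2 * π / n := by push_cast; ring
  have h₂ : 2 * π * ((m + 2 : ℕ) : ℝ) / n = 2 * π * (m + 1 : ℕ) / n + 2 * π / n := by
    push_cast; ring
  rw [h₀, h₂, cos_add, cos_sub]
  ring

theorem cycleGraph_eigenvector_eq_zero (hn : 3 ≤ n) {φ : ℝ} (hφ : 0 < φ)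
    (hnφ : n * φ < 2 * π) {x : Fin n → ℝ}
    (hx : (cycleGraph n).lapMatrix ℝ *ᵥ x = (2 - 2 * cos φ) • x) : x = 0 := by
  have hφπ : φ < π := by
    have : (3 : ℝ) ≤ n := by exact_mod_cast hn
    nlinarith [pi_pos]
  have hsin : sin φ ≠ 0 := (sin_pos_of_pos_of_lt_pi hφ hφπ).ne'
  have hcos : cos (n * φ) ≠ 1 := by
    rw [Ne, cos_eq_one_iff_of_lt_of_lt (by nlinarith [pi_pos]) hnφ]
    positivity
  set g : ℕ → ℝ := fun m => x m
  obtain ⟨A, B, hAB⟩ := exists_cos_sin_of_recurrence hsin (g := g) fun m => by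
    have := congrFun hx (m + 1 : ℕ)
    rw [cycleGraph_lapMatrix_mulVec_natCast hn, Pi.smul_apply, smul_eq_mul] at this
    linear_combination -this
  have hper : ∀ m, g (m + n) = g m := fun m => by simp [g]
  obtain ⟨rfl, rfl⟩ : A = 0 ∧ B = 0 := by
    refine eq_zero_of_cos_sin_periodic hsin hcos ?_ ?_
    · simpa [hAB] using hper 0
    · simpa [hAB, add_mul, add_comm] using hper 1
  ext i
  simpa [g] using hAB i

theorem cycleGraph_le_eigenvalue (hn : 3 ≤ n) {ν : ℝ} (hν : 0 < ν) {x : Fin n → ℝ}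
    (hx : (cycleGraph n).lapMatrix ℝ *ᵥ x = ν • x) (hx0 : x ≠ 0) :
    2 - 2 * cos (2 * π / n) ≤ ν := by
  by_contra! hlt
  have hcos : cos (arccos (1 - ν / 2)) = 1 - ν / 2 :=
    cos_arccos (by linarith [neg_one_le_cos (2 * π / n)]) (by linarith)
  have hφ : arccos (1 - ν / 2) < 2 * π / n := by
    have h₀ : 0 ≤ 2 * π / n := by positivity
    have h₁ : 2 * π / n ≤ π := by
      rw [div_le_iff₀ (by positivity)]
      nlinarith [pi_pos, show (3 : ℝ) ≤ n by exact_mod_cast hn]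
    calc arccos (1 - ν / 2) < arccos (cos (2 * π / n)) :=
          strictAntiOn_arccos ⟨neg_one_le_cos _, cos_le_one _⟩
            ⟨by linarith [neg_one_le_cos (2 * π / n)], by linarith⟩ (by linarith)
      _ = 2 * π / n := arccos_cos h₀ h₁
  refine hx0 (cycleGraph_eigenvector_eq_zero hn (arccos_pos.mpr (by linarith : 1 - ν / 2 < 1))
    ?_ ?_)
  · rwa [lt_div_iff₀ (by positivity), mul_comm] at hφ
  · rw [hcos, hx]
    ring_nf

end Cycle

end SimpleGraph

section Theta2

variable {k : ℕ} {lam : ℝ}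

theorem theta2_sq_sub_mul_add_eq_zero (hk : 1 ≤ k) (lam : ℝ) :
    theta2 k lam ^ 2 - (k + lam) * theta2 k lam + lam = 0 := by
  have hk' : (1 : ℝ) ≤ k := by exact_mod_cast hk
  have hD := Real.sq_sqrt (show 0 ≤ lam ^ 2 + 2 * ((k : ℝ) - 2) * lam + (k : ℝ) ^ 2 by
    nlinarith [sq_nonneg (lam + k - 2)])
  unfold theta2
  linear_combination hD / 4

theorem theta2_le_of_nonpos (hk : 1 ≤ k) {μ : ℝ} (hμ : μ ^ 2 - (k + lam) * μ + lam ≤ 0) :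
    theta2 k lam ≤ μ := by
  have hfac : μ ^ 2 - (k + lam) * μ + lam =
      (μ - theta2 k lam) * (μ - (k + lam - theta2 k lam)) := by
    linear_combination theta2_sq_sub_mul_add_eq_zero hk lam
  have hroots : theta2 k lam ≤ k + lam - theta2 k lam := by
    unfold theta2
    linarith [Real.sqrt_nonneg (lam ^ 2 + 2 * ((k : ℝ) - 2) * lam + (k : ℝ) ^ 2)]
  by_contra! hlt
  have := mul_pos_of_neg_of_neg (sub_neg.mpr hlt) (sub_neg.mpr (hlt.trans_le hroots))
  linarith

theorem theta2_le_one (hk : 1 ≤ k) (lam : ℝ) : theta2 k lam ≤ 1 :=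
  theta2_le_of_nonpos hk (by nlinarith [show (1 : ℝ) ≤ k by exact_mod_cast hk])

theorem theta2_pos (hlam : 0 < lam) : 0 < theta2 k lam := by
  have hlt : Real.sqrt (lam ^ 2 + 2 * ((k : ℝ) - 2) * lam + (k : ℝ) ^ 2) < k + lam := by
    rw [Real.sqrt_lt' (by positivity)]
    nlinarith
  unfold theta2
  linarith

end Theta2

section RingClique

open SimpleGraph

variable {n k : ℕ} [NeZero n] [NeZero k]

def cliqueLift (t : ℝ) (H : Fin n → ℝ) : Fin n × Fin k → ℝ :=
  fun v => H v.1 * (1 - if v.2 = 0 then t else 0)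

theorem ringClique_adj_iff (hn : 3 ≤ n) {i j : Fin n} {a b : Fin k} :
    (ringClique n k).Adj (i, a) (j, b) ↔
      (j = i ∧ b ≠ a) ∨ (a = 0 ∧ b = 0 ∧ (cycleGraph n).Adj i j) := by
  have hij : (cycleGraph n).Adj i j → i ≠ j := Adj.ne
  simp only [cycleGraph_adj', ← Fin.val_eq_val_add_one_mod_iff (by omega : 2 ≤ n)] at hij ⊢
  simp only [ringClique, Fin.ext_iff, Fin.val_zero, ne_eq, Prod.ext_iff]
  grind

theorem ringClique_lapMatrix_mulVec_apply (hn : 3 ≤ n) (x : Fin n × Fin k → ℝ) (i : Fin n)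
    (a : Fin k) : ((ringClique n k).lapMatrix ℝ *ᵥ x) (i, a) = k * x (i, a) - ∑ b, x (i, b) +
      if a = 0 then ((cycleGraph n).lapMatrix ℝ *ᵥ fun j => x (j, 0)) i else 0 := by
  have hsplit : ∀ j b, (if (ringClique n k).Adj (i, a) (j, b) then x (i, a) - x (j, b) else 0) =
      (if j = i then x (i, a) - x (i, b) else 0) +
      if a = 0 then (if b = 0 then
        (if (cycleGraph n).Adj i j then x (i, 0) - x (j, 0) else 0) else 0) else 0 := by
    intro j b
    simp only [ringClique_adj_iff hn]
    split_ifs <;> simp_all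
  rw [lapMatrix_mulVec_apply_eq_sum, Fintype.sum_prod_type]
  simp_rw [hsplit, sum_add_distrib]
  by_cases ha : a = 0 <;> simp [lapMatrix_mulVec_apply_eq_sum, ha]

theorem ringClique_lapMatrix_mulVec_cliqueLift (hn : 3 ≤ n) {H : Fin n → ℝ} {ν t : ℝ}
    (hH : (cycleGraph n).lapMatrix ℝ *ᵥ H = ν • H) (ht : t ^ 2 - (k + ν) * t + ν = 0) :
    (ringClique n k).lapMatrix ℝ *ᵥ cliqueLift t H = t • cliqueLift t H := by
  ext ⟨i, a⟩
  have hhub : (fun j => cliqueLift (k := k) t H (j, 0)) = (1 - t) • H := by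
    ext j; simp [cliqueLift, mul_comm]
  have hsum : ∑ b : Fin k, cliqueLift t H (i, b) = H i * (k - t) := by
    simp [cliqueLift, ← mul_sum, sum_sub_distrib]
  rw [ringClique_lapMatrix_mulVec_apply hn, hsum]
  by_cases ha : a = 0
  · subst ha
    rw [if_pos rfl, hhub, mulVec_smul, hH]
    simp only [cliqueLift, Pi.smul_apply, smul_eq_mul, if_true]
    linear_combination H i * ht
  · simp [cliqueLift, ha]
    ring

theorem ringClique_sub_mul_of_ne_zero {x : Fin n × Fin k → ℝ} {μ : ℝ}
    (hn : 3 ≤ n) (hx : (ringClique n k).lapMatrix ℝ *ᵥ x = μ • x) (i : Fin n) (b : Fin k)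
    (hb : b ≠ 0) : (k - μ) * x (i, b) = ∑ b, x (i, b) := by
  have := congrFun hx (i, b)
  simp only [ringClique_lapMatrix_mulVec_apply hn, hb, if_false, Pi.smul_apply, smul_eq_mul]
    at this
  linear_combination this

theorem ringClique_one_sub_mul_sum {x : Fin n × Fin k → ℝ} {μ : ℝ}
    (hn : 3 ≤ n) (hx : (ringClique n k).lapMatrix ℝ *ᵥ x = μ • x) (i : Fin n) :
    (1 - μ) * ∑ b, x (i, b) = (k - μ) * x (i, 0) := by
  have hcard : (({0}ᶜ : Finset (Fin k)).card : ℝ) = k - 1 := by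
    rw [card_compl, card_singleton, Fintype.card_fin, Nat.cast_sub NeZero.one_le, Nat.cast_one]
  have hS : (k - μ) * ∑ b, x (i, b) = (k - μ) * x (i, 0) + (k - 1) * ∑ b, x (i, b) := by
    conv_lhs => rw [Fintype.sum_eq_add_sum_compl (0 : Fin k), mul_add, mul_sum]
    rw [sum_congr rfl fun b hb => ringClique_sub_mul_of_ne_zero hn hx i b (by simpa using hb),
      sum_const, nsmul_eq_mul, hcard]
  linear_combination hS

theorem ringClique_lapMatrix_mulVec_hubs {x : Fin n × Fin k → ℝ} {μ : ℝ}
    (hn : 3 ≤ n) (hx : (ringClique n k).lapMatrix ℝ *ᵥ x = μ • x) (hμ : μ ≠ 1) :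
    (cycleGraph n).lapMatrix ℝ *ᵥ (fun i => x (i, 0)) =
      (μ * (k - μ) / (1 - μ)) • fun i => x (i, 0) := by
  ext i
  have hhub := congrFun hx (i, 0)
  rw [ringClique_lapMatrix_mulVec_apply hn, if_pos rfl, Pi.smul_apply, smul_eq_mul] at hhub
  rw [Pi.smul_apply, smul_eq_mul, div_mul_eq_mul_div, eq_div_iff (sub_ne_zero.mpr hμ.symm)]
  linear_combination (1 - μ) * hhub + ringClique_one_sub_mul_sum hn hx i

theorem ringClique_hubs_ne_zero {x : Fin n × Fin k → ℝ} {μ : ℝ}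
    (hn : 3 ≤ n) (hx : (ringClique n k).lapMatrix ℝ *ᵥ x = μ • x) (hx0 : x ≠ 0) (hμ1 : μ ≠ 1)
    (hμk : μ ≠ k) : (fun i => x (i, 0)) ≠ 0 := by
  intro hzero
  refine hx0 (funext fun ⟨i, b⟩ => ?_)
  have hhub : x (i, 0) = 0 := congrFun hzero i
  have hsum : ∑ b, x (i, b) = 0 := by
    have := ringClique_one_sub_mul_sum hn hx i
    rw [hhub, mul_zero] at this
    exact (mul_eq_zero.mp this).resolve_left (sub_ne_zero.mpr hμ1.symm)
  by_cases hb : b = 0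
  · rw [hb, hhub]; rfl
  · have := ringClique_sub_mul_of_ne_zero hn hx i b hb
    rw [hsum] at this
    exact (mul_eq_zero.mp this).resolve_left (sub_ne_zero.mpr hμk.symm)

theorem theta2_mem_eigSet_ringClique (hn : 3 ≤ n) (hk : 2 ≤ k) :
    theta2 k (2 - 2 * cos (2 * π / n)) ∈ eigSet ((ringClique n k).lapMatrix ℝ) := by
  refine ⟨_, fun h => ?_, ringClique_lapMatrix_mulVec_cliqueLift hn
    (cycleGraph_lapMatrix_mulVec_cos hn) (theta2_sq_sub_mul_add_eq_zero (by omega) _)⟩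
  have := congrFun h (0, ⟨1, hk⟩)
  simp [cliqueLift, Fin.ext_iff] at this

theorem theta2_le_of_mem_eigSet_ringClique (hn : 3 ≤ n) {μ : ℝ}
    (hμ : μ ∈ eigSet ((ringClique n k).lapMatrix ℝ)) (hμ0 : 0 < μ) :
    theta2 k (2 - 2 * cos (2 * π / n)) ≤ μ := by
  obtain ⟨x, hx0, hx⟩ := hμ
  rcases le_or_gt 1 μ with hμ1 | hμ1
  · exact (theta2_le_one NeZero.one_le _).trans hμ1
  have hk : (1 : ℝ) ≤ k := by exact_mod_cast NeZero.one_le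
  have hgap := cycleGraph_le_eigenvalue hn
    (div_pos (mul_pos hμ0 (by linarith)) (by linarith))
    (ringClique_lapMatrix_mulVec_hubs hn hx hμ1.ne)
    (ringClique_hubs_ne_zero hn hx hx0 hμ1.ne (by linarith))
  rw [le_div_iff₀ (by linarith)] at hgap
  exact theta2_le_of_nonpos NeZero.one_le (by linarith)

end RingClique

theorem lamMinPos_ringClique (n k : ℕ) (hn : 3 ≤ n) (hk : 2 ≤ k) :
    lamMinPos ((ringClique n k).lapMatrix ℝ) =
      theta2 k (2 - 2 * Real.cos (2 * Real.pi / n)) := by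
  have : NeZero n := ⟨by omega⟩
  have : NeZero k := ⟨by omega⟩
  have hgap : 0 < 2 - 2 * cos (2 * π / n) := by linarith [cos_two_pi_div_lt_one (by omega : 1 < n)]
  refine IsLeast.csInf_eq ⟨⟨theta2_mem_eigSet_ringClique hn hk, theta2_pos hgap⟩, ?_⟩
  rintro μ ⟨hμ, hμ0⟩
  exact theta2_le_of_mem_eigSet_ringClique hn hμ hμ0
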